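/- arXiv:2103.15336 — 7 statements merged into one kernel-verified Lean document; each statement's English description precedes it below -/
import Mathlib

section
/- Let φ'_{j,i} (j ∈ ℤ/mnℤ, i ∈ ℤ/mℤ) be field elements and Q'_{j,i} = Σ_{k=0}^{mn-1} Π_{l=0}^{k-1} φ'_{j+l,i}. Then for all j ∈ ℤ/mnℤ and i ∈ ℤ/mℤ, Q'_{j,i} + φ'_{j+1,i} · Q'_{j+2,i} = (1 + φ'_{j,i}) · Q'_{j+1,i}. -/
private lemma prod_shift_aux {K : Type*} [Field K] (N : ℕ) [NeZero N] (f : ZMod N → K)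
    (j : ZMod N) : ∏ l ∈ Finset.range N, f (j + (l : ZMod N)) = ∏ x : ZMod N, f x := by
  refine Finset.prod_nbij (fun l => j + (l : ZMod N)) (fun a _ => Finset.mem_univ _)
    ?_ ?_ (fun a _ => rfl)
  · intro a ha b hb hab
    simp only [Finset.coe_range, Set.mem_Iio] at ha hb
    have h1 : (a : ZMod N) = (b : ZMod N) := by simpa using hab
    have h2 := congrArg ZMod.val h1
    rwa [ZMod.val_natCast_of_lt ha, ZMod.val_natCast_of_lt hb] at h2
  · intro x _
    refine ⟨(x - j).val, ?_, ?_⟩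
    · simp [Finset.coe_range, Set.mem_Iio, ZMod.val_lt]
    · simp [ZMod.natCast_val, ZMod.cast_id]

private lemma key_aux {K : Type*} [Field K] (N : ℕ) [NeZero N] (f : ZMod N → K)
    (j : ZMod N) :
    (∑ k ∈ Finset.range N, ∏ l ∈ Finset.range k, f (j + (l : ZMod N)))
      + ∏ x : ZMod N, f x
    = 1 + f j * ∑ k ∈ Finset.range N, ∏ l ∈ Finset.range k, f (j + 1 + (l : ZMod N)) := by
  have h3 : ∀ k, ∏ l ∈ Finset.range (k + 1), f (j + (l : ZMod N))
      = f j * ∏ l ∈ Finset.range k, f (j + 1 + (l : ZMod N)) := by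
    intro k
    rw [Finset.prod_range_succ', mul_comm]
    congr 1
    · simp
    · refine Finset.prod_congr rfl fun l _ => ?_
      congr 1
      push_cast
      ring
  have h1 : ∑ k ∈ Finset.range (N + 1), ∏ l ∈ Finset.range k, f (j + (l : ZMod N))
      = (∑ k ∈ Finset.range N, ∏ l ∈ Finset.range k, f (j + (l : ZMod N)))
        + ∏ l ∈ Finset.range N, f (j + (l : ZMod N)) :=
    Finset.sum_range_succ _ _
  have h2 : ∑ k ∈ Finset.range (N + 1), ∏ l ∈ Finset.range k, f (j + (l : ZMod N))
      = (∑ k ∈ Finset.range N, ∏ l ∈ Finset.range (k + 1), f (j + (l : ZMod N)))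
        + ∏ l ∈ Finset.range 0, f (j + (l : ZMod N)) :=
    Finset.sum_range_succ' _ _
  rw [prod_shift_aux N f j] at h1
  rw [← h1, h2]
  simp only [Finset.prod_range_zero]
  rw [Finset.sum_congr rfl fun k _ => h3 k, ← Finset.mul_sum]
  ring

/-- Identity `Q'_{j,i} + φ'_{j+1,i} Q'_{j+2,i} = (1 + φ'_{j,i}) Q'_{j+1,i}` for
`Q'_{j,i} = Σ_{k=0}^{mn-1} Π_{l=0}^{k-1} φ'_{j+l,i}`, valid for arbitrary field elements. -/
theorem stmt2 {K : Type*} [Field K] (m n : ℕ) (hm : 1 ≤ m) (hn : 1 ≤ n)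
    (φ' : ZMod (m * n) → ZMod m → K)
    (Q' : ZMod (m * n) → ZMod m → K)
    (hQ' : ∀ j i, Q' j i =
      ∑ k ∈ Finset.range (m * n), ∏ l ∈ Finset.range k, φ' (j + (l : ZMod (m * n))) i)
    (j : ZMod (m * n)) (i : ZMod m) :
    Q' j i + φ' (j + 1) i * Q' (j + 2) i = (1 + φ' j i) * Q' (j + 1) i := by
  haveI : NeZero (m * n) := ⟨(Nat.mul_pos hm hn).ne'⟩
  have k1 := key_aux (m * n) (fun x => φ' x i) j
  have k2 := key_aux (m * n) (fun x => φ' x i) (j + 1)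
  rw [hQ' j i, hQ' (j + 1) i, hQ' (j + 2) i]
  have e3 : ∑ k ∈ Finset.range (m * n), ∏ l ∈ Finset.range k, φ' (j + 2 + (l : ZMod (m * n))) i
      = ∑ k ∈ Finset.range (m * n), ∏ l ∈ Finset.range k, φ' (j + 1 + 1 + (l : ZMod (m * n))) i := by
    refine Finset.sum_congr rfl fun k _ => Finset.prod_congr rfl fun l _ => ?_
    congr 1
    ring
  rw [e3]
  linear_combination k1 - k2
end

section
/- Fix j ∈ ℤ/mnℤ (mn ≥ 3). Define the birational transformation r_j on the field ℂ(φ_{k,i}) by r_j(φ_{j-1,i}) = φ_{j-1,i} φ_{j,i+1} P_{j,i+2}/P_{j,i+1}, r_j(φ_{j,i}) = φ_{j,i+1}^{-1} P_{j,i}/P_{j,i+2}, r_j(φ_{j+1,i}) = φ_{j,i} φ_{j+1,i} P_{j,i+1}/P_{j,i}, and r_j(φ_{k,i}) = φ_{k,i} for k ≠ j, j±1, where P_{j,i} = Σ_{k=0}^{m-1} Π_{l=0}^{k-1} φ_{j,i+l}. Then r_j acts on the parameters α_k = Π_i φ_{k,i} by r_j(α_j) = α_j^{-1}, r_j(α_{j±1})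 = α_{j±1} α_j, and r_j(α_k) = α_k for k ≠ j, j±1. -/
/-- The birational transformation `r_j` acts on the multiplicative simple roots
`α_k = Π_i φ_{k,i}` by `r_j(α_j) = α_j⁻¹`, `r_j(α_{j±1}) = α_{j±1} α_j`, and fixes the
other `α_k`.  Here `ψ` denotes the family of images `r_j(φ_{k,i})`. -/
theorem stmt4 {K : Type*} [Field K] (m n : ℕ) (hm : 2 ≤ m) (hmn : 3 ≤ m * n)
    (φ : ZMod (m * n) → ZMod m → K) (hφ : ∀ k i, φ k i ≠ 0)
    (j : ZMod (m * n))
    (P : ZMod (m * n) → ZMod m → K)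
    (hP : ∀ k i, P k i = ∑ a ∈ Finset.range m, ∏ l ∈ Finset.range a, φ k (i + (l : ZMod m)))
    (hPne : ∀ i, P j i ≠ 0)
    (ψ : ZMod (m * n) → ZMod m → K)
    (hψ : ∀ k i, ψ k i =
      if k = j then (φ j (i + 1))⁻¹ * (P j i / P j (i + 2))
      else if k = j - 1 then φ (j - 1) i * φ j (i + 1) * (P j (i + 2) / P j (i + 1))
      else if k = j + 1 then φ j i * φ (j + 1) i * (P j (i + 1) / P j i)
      else φ k i)
    (α α' : ZMod (m * n) → K)
    (hα : ∀ k, α k = ∏ i ∈ Finset.range m, φ k ((i : ℕ) : ZMod m))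
    (hα' : ∀ k, α' k = ∏ i ∈ Finset.range m, ψ k ((i : ℕ) : ZMod m)) :
    α' j = (α j)⁻¹ ∧ α' (j - 1) = α (j - 1) * α j ∧ α' (j + 1) = α (j + 1) * α j ∧
      ∀ k, k ≠ j → k ≠ j - 1 → k ≠ j + 1 → α' k = α k := by
  have hm0 : NeZero m := ⟨by omega⟩
  -- product over range m = product over univ of ZMod m
  have key : ∀ f : ZMod m → K, ∏ i ∈ Finset.range m, f ((i : ℕ) : ZMod m) = ∏ i : ZMod m, f i := by
    intro f
    refine Finset.prod_nbij' (fun a => ((a : ℕ) : ZMod m)) (fun b => b.val) ?_ ?_ ?_ ?_ ?_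
    · intro a _; exact Finset.mem_univ _
    · intro b _; exact Finset.mem_range.mpr (ZMod.val_lt b)
    · intro a ha; exact ZMod.val_natCast_of_lt (Finset.mem_range.mp ha)
    · intro b _; show ((b.val : ℕ) : ZMod m) = b; rw [ZMod.natCast_val, ZMod.cast_id]
    · intro a _; rfl
  have shift : ∀ (f : ZMod m → K) (c : ZMod m), ∏ i : ZMod m, f (i + c) = ∏ i : ZMod m, f i := by
    intro f c
    exact Fintype.prod_equiv (Equiv.addRight c) _ _ (fun x => rfl)
  -- distinctness
  have h2ne : ((2 : ℕ) : ZMod (m*n)) ≠ 0 := by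
    rw [Ne, ZMod.natCast_eq_zero_iff]
    intro h; have := Nat.le_of_dvd (by norm_num) h; omega
  have h1ne : (1 : ZMod (m*n)) ≠ 0 := by
    have : ((1 : ℕ) : ZMod (m*n)) ≠ 0 := by
      rw [Ne, ZMod.natCast_eq_zero_iff]
      intro h; have := Nat.le_of_dvd (by norm_num) h; omega
    simpa using this
  have hjm : j - 1 ≠ j := by
    intro h; exact h1ne (sub_eq_self.mp h)
  have hjp : j + 1 ≠ j := by
    intro h; exact h1ne (by linear_combination h)
  have hjpm : j + 1 ≠ j - 1 := by
    intro h
    apply h2ne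
    push_cast
    linear_combination h
  -- Pprod nonzero
  have hPprod : (∏ i : ZMod m, P j i) ≠ 0 := Finset.prod_ne_zero_iff.mpr fun i _ => hPne i
  have hαj : α j = ∏ i : ZMod m, φ j i := by rw [hα]; exact key _
  refine ⟨?_, ?_, ?_, ?_⟩
  · rw [hα', hαj]
    have : ∀ i : ZMod m, ψ j i = (φ j (i + 1))⁻¹ * (P j i / P j (i + 2)) := by
      intro i; rw [hψ]; simp
    rw [key (fun i => ψ j i)]
    simp_rw [this]
    rw [Finset.prod_mul_distrib, Finset.prod_div_distrib,
      shift (fun i => (φ j i)⁻¹) 1, shift (fun i => P j i) 2,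
      div_self hPprod, mul_one, Finset.prod_inv_distrib]
  · rw [hα', hα (j-1), hαj]
    have : ∀ i : ZMod m, ψ (j-1) i = φ (j - 1) i * φ j (i + 1) * (P j (i + 2) / P j (i + 1)) := by
      intro i; rw [hψ]; simp [hjm]
    rw [key (fun i => ψ (j-1) i), key (fun i => φ (j-1) i)]
    simp_rw [this]
    rw [Finset.prod_mul_distrib, Finset.prod_mul_distrib, Finset.prod_div_distrib,
      shift (fun i => φ j i) 1, shift (fun i => P j i) 2, shift (fun i => P j i) 1]
    field_simp
  · rw [hα', hα (j+1), hαj]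
    have : ∀ i : ZMod m, ψ (j+1) i = φ j i * φ (j + 1) i * (P j (i + 1) / P j i) := by
      intro i; rw [hψ]; simp [hjp, hjpm]
    rw [key (fun i => ψ (j+1) i), key (fun i => φ (j+1) i)]
    simp_rw [this]
    rw [Finset.prod_mul_distrib, Finset.prod_mul_distrib, Finset.prod_div_distrib,
      shift (fun i => P j i) 1]
    field_simp
  · intro k hk hk1 hk2
    rw [hα', hα]
    congr 1; ext i
    rw [hψ]; simp [hk, hk1, hk2]
end

section
/- With r_j defined as in the paper (acting on φ_{j-1,·}, φ_{j,·}, φ_{j+1,·} via the polynomials P_{j,i} and fixing all other variables), one has r_j(β_i) = β_i for every i ∈ ℤ/mℤ, where β_i = Π_{k=0}^{mn-1} φ_{k,i}. -/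
/-!
Only the rows `j - 1`, `j`, `j + 1` of column `i` change, and they are pairwise distinct since
`m * n ≥ 3`. Their product picks up `φ_{j,i+1} P_{j,i+2}/P_{j,i+1}`, `φ_{j,i+1}⁻¹ P_{j,i}/P_{j,i+2}`
and `P_{j,i+1}/P_{j,i}`, which telescope to `1`.
-/

theorem ZMod.prod_range_natCast {M : Type*} [CommMonoid M] (N : ℕ) [NeZero N]
    (f : ZMod N → M) : ∏ k ∈ Finset.range N, f k = ∏ k, f k :=
  Finset.prod_nbij' (↑) ZMod.val (by simp) (by simp [ZMod.val_lt])
    (fun _ hk => ZMod.val_cast_of_lt (Finset.mem_range.1 hk))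
    (fun x _ => ZMod.natCast_zmod_val x) (fun _ _ => rfl)

theorem ZMod.natCast_ne_zero_of_pos_of_lt {N k : ℕ} (hk : 0 < k) (hkN : k < N) :
    (k : ZMod N) ≠ 0 := fun h =>
  absurd (Nat.le_of_dvd hk ((ZMod.natCast_eq_zero_iff k N).1 h)) (by omega)

theorem Finset.prod_univ_eq_of_eq_off_three {ι M : Type*} [Fintype ι] [DecidableEq ι]
    [CommMonoid M] {f g : ι → M} {a b c : ι} (hab : a ≠ b) (hac : a ≠ c) (hbc : b ≠ c)
    (h_off : ∀ k, k ≠ a → k ≠ b → k ≠ c → g k = f k)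
    (h_on : g a * g b * g c = f a * f b * f c) :
    ∏ k, g k = ∏ k, f k := by
  have prod_abc : ∀ u : ι → M, ∏ k ∈ {a, b, c}, u k = u a * u b * u c := fun u => by
    rw [prod_insert (by simp [hab, hac]), prod_pair hbc, mul_assoc]
  rw [← prod_sdiff (subset_univ {a, b, c}), ← prod_sdiff (subset_univ {a, b, c}),
    prod_abc, prod_abc, h_on]
  congr 1
  refine prod_congr rfl fun k hk => ?_
  simp only [mem_sdiff, mem_insert, mem_singleton, not_or] at hk
  exact h_off k hk.2.1 hk.2.2.1 hk.2.2.2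

theorem mul_mul_div_mul_inv_mul_div_mul_mul_div {K : Type*} [Field K] {x p₀ p₁ p₂ : K}
    (hx : x ≠ 0) (h₀ : p₀ ≠ 0) (h₁ : p₁ ≠ 0) (h₂ : p₂ ≠ 0) (a b y : K) :
    a * x * (p₂ / p₁) * (x⁻¹ * (p₀ / p₂)) * (y * b * (p₁ / p₀)) = a * y * b := by
  field_simp

theorem stmt5_general {K : Type*} [Field K] (m n : ℕ) (hmn : 3 ≤ m * n)
    (φ : ZMod (m * n) → ZMod m → K) (hφ : ∀ k i, φ k i ≠ 0)
    (j : ZMod (m * n))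
    (P : ZMod (m * n) → ZMod m → K)
    (hPne : ∀ i, P j i ≠ 0)
    (ψ : ZMod (m * n) → ZMod m → K)
    (hψ : ∀ k i, ψ k i =
      if k = j then (φ j (i + 1))⁻¹ * (P j i / P j (i + 2))
      else if k = j - 1 then φ (j - 1) i * φ j (i + 1) * (P j (i + 2) / P j (i + 1))
      else if k = j + 1 then φ j i * φ (j + 1) i * (P j (i + 1) / P j i)
      else φ k i)
    (β : ZMod m → K)
    (hβ : ∀ i, β i = ∏ k ∈ Finset.range (m * n), φ ((k : ℕ) : ZMod (m * n)) i) :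
    ∀ i, (∏ k ∈ Finset.range (m * n), ψ ((k : ℕ) : ZMod (m * n)) i) = β i := by
  intro i
  have : NeZero (m * n) := ⟨by omega⟩
  have hone : (1 : ZMod (m * n)) ≠ 0 :=
    mod_cast ZMod.natCast_ne_zero_of_pos_of_lt (k := 1) one_pos (by omega)
  have htwo : (2 : ZMod (m * n)) ≠ 0 :=
    mod_cast ZMod.natCast_ne_zero_of_pos_of_lt (k := 2) two_pos (by omega)
  have h₁ : j - 1 ≠ j := fun h => hone (by linear_combination -h)
  have h₂ : j - 1 ≠ j + 1 := fun h => htwo (by linear_combination -h)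
  have h₃ : j ≠ j + 1 := fun h => hone (by linear_combination -h)
  rw [hβ, ZMod.prod_range_natCast _ (ψ · i), ZMod.prod_range_natCast _ (φ · i)]
  refine Finset.prod_univ_eq_of_eq_off_three h₁ h₂ h₃
    (fun k ha hb hc => by simp [hψ, ha, hb, hc]) ?_
  simp only [hψ, if_pos, if_neg h₁, if_neg h₂, if_neg h₂.symm, if_neg h₃.symm, if_neg h₃]
  exact mul_mul_div_mul_inv_mul_div_mul_mul_div (hφ j (i + 1)) (hPne i) (hPne (i + 1))
    (hPne (i + 2)) _ _ _

/-- The transformation `r_j` fixes every parameter `β_i = Π_{k=0}^{mn-1} φ_{k,i}`: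
the three correction factors introduced in column `i` cancel. -/
theorem stmt5 {K : Type*} [Field K] (m n : ℕ) (hm : 2 ≤ m) (hmn : 3 ≤ m * n)
    (φ : ZMod (m * n) → ZMod m → K) (hφ : ∀ k i, φ k i ≠ 0)
    (j : ZMod (m * n))
    (P : ZMod (m * n) → ZMod m → K)
    (hP : ∀ k i, P k i = ∑ a ∈ Finset.range m, ∏ l ∈ Finset.range a, φ k (i + (l : ZMod m)))
    (hPne : ∀ i, P j i ≠ 0)
    (ψ : ZMod (m * n) → ZMod m → K)
    (hψ : ∀ k i, ψ k i =
      if k = j then (φ j (i + 1))⁻¹ * (P j i / P j (i + 2))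
      else if k = j - 1 then φ (j - 1) i * φ j (i + 1) * (P j (i + 2) / P j (i + 1))
      else if k = j + 1 then φ j i * φ (j + 1) i * (P j (i + 1) / P j i)
      else φ k i)
    (β : ZMod m → K)
    (hβ : ∀ i, β i = ∏ k ∈ Finset.range (m * n), φ ((k : ℕ) : ZMod (m * n)) i) :
    ∀ i, (∏ k ∈ Finset.range (m * n), ψ ((k : ℕ) : ZMod (m * n)) i) = β i :=
  stmt5_general m n hmn φ hφ j P hPne ψ hψ β hβ
end

section
/- The birational transformation r_j is an involution: r_j(r_j(φ_{k,i})) = φ_{k,i} for all k ∈ ℤ/mnℤ and i ∈ ℤ/mℤ, as an identity of rational functions in the variables φ. -/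
open Finset

lemma aux_main {K : Type*} [Field K] {m : ℕ} [NeZero m] (f : ZMod m → K) (hf : ∀ x, f x ≠ 0)
    (P : ZMod m → K)
    (hP : ∀ x, P x = ∑ a ∈ Finset.range m, ∏ l ∈ Finset.range a, f (x + (l : ZMod m)))
    (hPne : ∀ x, P x ≠ 0) (i : ZMod m) :
    ∑ a ∈ Finset.range m, ∏ l ∈ Finset.range a,
      ((f (i + (l : ZMod m) + 1))⁻¹ * (P (i + (l : ZMod m)) / P (i + (l : ZMod m) + 2)))
      = f i * P (i + 1) / ∏ y : ZMod m, f y := by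
  set π : ℕ → ZMod m → K := fun a x => ∏ l ∈ Finset.range a, f (x + (l : ZMod m)) with hπ
  have hPπ : ∀ x, P x = ∑ a ∈ range m, π a x := by
    intro x; rw [hP x]
  have hπne : ∀ a x, π a x ≠ 0 := fun a x => Finset.prod_ne_zero_iff.mpr fun l _ => hf _
  have hπadd : ∀ a b x, π (a + b) x = π a x * π b (x + (a : ZMod m)) := by
    intro a b x
    simp only [hπ, Finset.prod_range_add]
    congr 1
    refine Finset.prod_congr rfl fun l _ => ?_
    congr 1
    push_cast
    ring
  have hπ1 : ∀ x, π 1 x = f x := by intro x; simp [hπ]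
  have hπ0 : ∀ x, π 0 x = 1 := by intro x; simp [hπ]
  have hQfull : ∀ x, π m x = ∏ y : ZMod m, f y := by
    intro x
    refine Finset.prod_nbij' (fun l => x + (l : ZMod m)) (fun y => (y - x).val) ?_ ?_ ?_ ?_ ?_
    · intro l _; exact Finset.mem_univ _
    · intro y _; exact Finset.mem_range.mpr (ZMod.val_lt _)
    · intro l hl
      simp only [add_sub_cancel_left]
      exact ZMod.val_cast_of_lt (Finset.mem_range.mp hl)
    · intro y _
      simp [ZMod.natCast_val, ZMod.cast_id]
    · intro l _; rfl
  set Q : K := ∏ y : ZMod m, f y with hQdef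
  have hQne : Q ≠ 0 := Finset.prod_ne_zero_iff.mpr fun y _ => hf y
  have key1 : ∀ x, f x * P (x + 1) = P x + (Q - 1) := by
    intro x
    have h1 : f x * P (x + 1) = ∑ b ∈ range m, π (b + 1) x := by
      rw [hPπ, Finset.mul_sum]
      refine Finset.sum_congr rfl fun b _ => ?_
      rw [show b + 1 = 1 + b from by ring, hπadd 1 b x, hπ1]
      norm_num
    rw [h1]
    have h2 : ∑ b ∈ range m, π (b + 1) x = (∑ c ∈ range (m + 1), π c x) - π 0 x := by
      rw [Finset.sum_range_succ']; ring
    rw [h2, Finset.sum_range_succ, hQfull, hπ0, ← hPπ x]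
    ring
  set U : ℕ → K := fun a => π a i * P (i + (a : ZMod m)) with hU
  have hUne : ∀ a, U a ≠ 0 := fun a => mul_ne_zero (hπne a i) (hPne _)
  have hU0 : U 0 = P i := by simp only [hU, hπ0, Nat.cast_zero, add_zero, one_mul]
  have hUm : U m = Q * P i := by
    simp only [hU, hQfull, ← hQdef, ZMod.natCast_self, add_zero]
  set S : ℕ → K := fun a => ∑ b ∈ range a, π b i with hS
  have hSsucc : ∀ a, S (a + 1) = S a + π a i := by
    intro a; simp only [hS]; exact Finset.sum_range_succ _ _
  have hUS : ∀ a, U a = P i + (Q - 1) * S a := by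
    intro a
    induction a with
    | zero => simp only [hS, Finset.sum_range_zero, mul_zero, add_zero, hU0]
    | succ a ih =>
      have e2 : U (a + 1) = π a i * (f (i + (a : ZMod m)) * P (i + (a : ZMod m) + 1)) := by
        simp only [hU, hπadd a 1 i, hπ1]
        have c1 : i + ((a + 1 : ℕ) : ZMod m) = i + (a : ZMod m) + 1 := by push_cast; ring
        rw [c1]; ring
      rw [e2, key1 (i + (a : ZMod m)), hSsucc]
      linear_combination ih
  have htel : ∀ A, ∑ a ∈ range A, π a i / (U a * U (a + 1)) = S A / (U 0 * U A) := by
    intro A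
    induction A with
    | zero => simp only [Finset.sum_range_zero, hS, zero_div]
    | succ A ih =>
      rw [Finset.sum_range_succ, ih]
      rw [div_add_div _ _ (mul_ne_zero (hUne 0) (hUne A)) (mul_ne_zero (hUne A) (hUne (A + 1))),
        div_eq_div_iff
          (mul_ne_zero (mul_ne_zero (hUne 0) (hUne A)) (mul_ne_zero (hUne A) (hUne (A + 1))))
          (mul_ne_zero (hUne 0) (hUne (A + 1)))]
      rw [hSsucc, hUS A, hUS (A + 1), hSsucc, hU0]
      ring
  have hprodP : ∀ a,
      (∏ l ∈ range a, P (i + (l : ZMod m))) * (P (i + (a : ZMod m)) * P (i + (a : ZMod m) + 1))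
      = P i * P (i + 1) * ∏ l ∈ range a, P (i + (l : ZMod m) + 2) := by
    intro a
    induction a with
    | zero => simp
    | succ a ih =>
      rw [Finset.prod_range_succ, Finset.prod_range_succ]
      have c1 : ((a + 1 : ℕ) : ZMod m) = (a : ZMod m) + 1 := by push_cast; ring
      rw [c1]
      have c2 : i + ((a : ZMod m) + 1) = i + (a : ZMod m) + 1 := by ring
      rw [c2]
      have c3 : i + (a : ZMod m) + 1 + 1 = i + (a : ZMod m) + 2 := by ring
      rw [c3]
      linear_combination P (i + (a : ZMod m) + 2) * ih
  have hterm : ∀ a, ∏ l ∈ range a,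
      ((f (i + (l : ZMod m) + 1))⁻¹ * (P (i + (l : ZMod m)) / P (i + (l : ZMod m) + 2)))
      = f i * (P i * P (i + 1)) * (π a i / (U a * U (a + 1))) := by
    intro a
    have e1 : ∏ l ∈ range a, f (i + (l : ZMod m) + 1) = π a (i + 1) := by
      simp only [hπ]
      refine Finset.prod_congr rfl fun l _ => ?_
      rw [show i + (l : ZMod m) + 1 = i + 1 + (l : ZMod m) from by ring]
    have e4 : U (a + 1) = f i * π a (i + 1) * P (i + (a : ZMod m) + 1) := by
      simp only [hU]
      rw [show a + 1 = 1 + a from by ring, hπadd 1 a i, hπ1, Nat.cast_one]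
      have c1 : i + ((1 + a : ℕ) : ZMod m) = i + (a : ZMod m) + 1 := by push_cast; ring
      rw [c1]
    have lhs : ∏ l ∈ range a,
        ((f (i + (l : ZMod m) + 1))⁻¹ * (P (i + (l : ZMod m)) / P (i + (l : ZMod m) + 2)))
        = (π a (i + 1))⁻¹ *
          ((∏ l ∈ range a, P (i + (l : ZMod m))) / (∏ l ∈ range a, P (i + (l : ZMod m) + 2))) := by
      rw [Finset.prod_mul_distrib, ← e1, ← Finset.prod_inv_distrib, ← Finset.prod_div_distrib]
    have hne2 : (∏ l ∈ range a, P (i + (l : ZMod m) + 2)) ≠ 0 :=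
      Finset.prod_ne_zero_iff.mpr fun l _ => hPne _
    have hND : (∏ l ∈ range a, P (i + (l : ZMod m))) / (∏ l ∈ range a, P (i + (l : ZMod m) + 2))
        = P i * P (i + 1) / (P (i + (a : ZMod m)) * P (i + (a : ZMod m) + 1)) := by
      rw [div_eq_div_iff hne2 (mul_ne_zero (hPne _) (hPne _))]
      linear_combination hprodP a
    rw [lhs, hND, e4]
    have hUa : U a = π a i * P (i + (a : ZMod m)) := rfl
    rw [hUa]
    field_simp [hf i, hπne a i, hπne a (i + 1), hPne (i + (a : ZMod m)), hPne (i + (a : ZMod m) + 1)]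
  calc ∑ a ∈ Finset.range m, ∏ l ∈ Finset.range a,
      ((f (i + (l : ZMod m) + 1))⁻¹ * (P (i + (l : ZMod m)) / P (i + (l : ZMod m) + 2)))
      = ∑ a ∈ range m, f i * (P i * P (i + 1)) * (π a i / (U a * U (a + 1))) := by
        exact Finset.sum_congr rfl fun a _ => hterm a
    _ = f i * (P i * P (i + 1)) * (S m / (U 0 * U m)) := by rw [← Finset.mul_sum, htel]
    _ = f i * P (i + 1) / Q := by
        have hSm : S m = P i := by simp only [hS]; rw [hPπ i]
        rw [hSm, hU0, hUm, ← mul_div_assoc,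
          div_eq_div_iff (mul_ne_zero (hPne i) (mul_ne_zero hQne (hPne i))) hQne]
        ring

/-- The birational transformation `r_j` is an involution: applying the substitution
`φ ↦ r_j(φ)` twice returns the original variables, as an identity of rational
functions (stated for arbitrary nonzero field values avoiding the denominators). -/
theorem stmt6 {K : Type*} [Field K] (m n : ℕ) (hm : 2 ≤ m) (hmn : 3 ≤ m * n)
    (φ : ZMod (m * n) → ZMod m → K) (hφ : ∀ k i, φ k i ≠ 0)
    (j : ZMod (m * n))
    (P : ZMod (m * n) → ZMod m → K)
    (hP : ∀ k i, P k i = ∑ a ∈ Finset.range m, ∏ l ∈ Finset.range a, φ k (i + (l : ZMod m)))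
    (hPne : ∀ i, P j i ≠ 0)
    (ψ : ZMod (m * n) → ZMod m → K)
    (hψ : ∀ k i, ψ k i =
      if k = j then (φ j (i + 1))⁻¹ * (P j i / P j (i + 2))
      else if k = j - 1 then φ (j - 1) i * φ j (i + 1) * (P j (i + 2) / P j (i + 1))
      else if k = j + 1 then φ j i * φ (j + 1) i * (P j (i + 1) / P j i)
      else φ k i)
    (Pψ : ZMod (m * n) → ZMod m → K)
    (hPψ : ∀ k i, Pψ k i = ∑ a ∈ Finset.range m, ∏ l ∈ Finset.range a, ψ k (i + (l : ZMod m)))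
    (hPψne : ∀ i, Pψ j i ≠ 0)
    (χ : ZMod (m * n) → ZMod m → K)
    (hχ : ∀ k i, χ k i =
      if k = j then (ψ j (i + 1))⁻¹ * (Pψ j i / Pψ j (i + 2))
      else if k = j - 1 then ψ (j - 1) i * ψ j (i + 1) * (Pψ j (i + 2) / Pψ j (i + 1))
      else if k = j + 1 then ψ j i * ψ (j + 1) i * (Pψ j (i + 1) / Pψ j i)
      else ψ k i) :
    ∀ k i, χ k i = φ k i := by
  haveI : NeZero m := ⟨by omega⟩
  haveI : NeZero (m * n) := ⟨by omega⟩
  have h1 : (1 : ZMod (m * n)) ≠ 0 := by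
    intro h
    have h' : ((1 : ℕ) : ZMod (m * n)) = 0 := by exact_mod_cast h
    have := (ZMod.natCast_eq_zero_iff 1 (m * n)).mp h'
    have := Nat.le_of_dvd (by norm_num) this
    omega
  have h2 : (2 : ZMod (m * n)) ≠ 0 := by
    intro h
    have h' : ((2 : ℕ) : ZMod (m * n)) = 0 := by exact_mod_cast h
    have := (ZMod.natCast_eq_zero_iff 2 (m * n)).mp h'
    have := Nat.le_of_dvd (by norm_num) this
    omega
  have hjm1 : j - 1 ≠ j := fun h => h1 (by linear_combination -h)
  have hjp1 : j + 1 ≠ j := fun h => h1 (by linear_combination h)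
  have hjpm : j + 1 ≠ j - 1 := fun h => h2 (by linear_combination h)
  have hψj : ∀ x, ψ j x = (φ j (x + 1))⁻¹ * (P j x / P j (x + 2)) := by
    intro x; rw [hψ, if_pos rfl]
  have hψjm : ∀ x, ψ (j - 1) x = φ (j - 1) x * φ j (x + 1) * (P j (x + 2) / P j (x + 1)) := by
    intro x; rw [hψ, if_neg hjm1, if_pos rfl]
  have hψjp : ∀ x, ψ (j + 1) x = φ j x * φ (j + 1) x * (P j (x + 1) / P j x) := by
    intro x; rw [hψ, if_neg hjp1, if_neg hjpm, if_pos rfl]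
  set Qv : K := ∏ y : ZMod m, φ j y with hQv
  have hQne : Qv ≠ 0 := Finset.prod_ne_zero_iff.mpr fun y _ => hφ j y
  have hPψj : ∀ x, Pψ j x = φ j x * P j (x + 1) / Qv := by
    intro x
    rw [hPψ,
      show (∑ a ∈ range m, ∏ l ∈ range a, ψ j (x + (l : ZMod m)))
        = ∑ a ∈ range m, ∏ l ∈ range a,
          ((φ j (x + (l : ZMod m) + 1))⁻¹ *
            (P j (x + (l : ZMod m)) / P j (x + (l : ZMod m) + 2))) from
        Finset.sum_congr rfl fun a _ => Finset.prod_congr rfl fun l _ => by rw [hψj]]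
    exact aux_main (φ j) (hφ j) (P j) (hP j) hPne x
  intro k i
  by_cases hk1 : k = j
  · subst hk1
    rw [hχ, if_pos rfl, hψj, hPψj i, hPψj (i + 2)]
    rw [show i + 1 + 1 = i + 2 from by ring, show i + 1 + 2 = i + 2 + 1 from by ring]
    field_simp [hφ k i, hφ k (i + 1), hφ k (i + 2), hPne (i + 1), hPne (i + 2 + 1)]
  · by_cases hk2 : k = j - 1
    · subst hk2
      rw [hχ, if_neg hjm1, if_pos rfl, hψjm i, hψj (i + 1), hPψj (i + 2), hPψj (i + 1)]
      rw [show i + 1 + 1 = i + 2 from by ring, show i + 1 + 2 = i + 2 + 1 from by ring]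
      field_simp [hφ j (i + 1), hφ j (i + 2), hPne (i + 1), hPne (i + 2), hPne (i + 2 + 1)]
    · by_cases hk3 : k = j + 1
      · subst hk3
        rw [hχ, if_neg hjp1, if_neg hjpm, if_pos rfl, hψj i, hψjp i, hPψj (i + 1), hPψj i]
        rw [show i + 1 + 1 = i + 2 from by ring]
        field_simp [hφ j i, hφ j (i + 1), hPne i, hPne (i + 1), hPne (i + 2)]
      · rw [hχ, if_neg hk1, if_neg hk2, if_neg hk3, hψ, if_neg hk1, if_neg hk2, if_neg hk3]
end

section
/- The transformations satisfy the intertwining relation r_j π_1 = π_1 r_{j-1} for all j ∈ ℤ/mnℤ, as automorphisms of the field ℂ(φ_{k,i}). -/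
/-- `P_{j,i} = Σ_{k=0}^{m-1} Π_{l=0}^{k-1} φ_{j,i+l}`. -/
noncomputable def polP (m M : ℕ) {K : Type*} [Field K] (φ : ZMod M → ZMod m → K)
    (j : ZMod M) (i : ZMod m) : K :=
  ∑ a ∈ Finset.range m, ∏ l ∈ Finset.range a, φ j (i + (l : ZMod m))

/-- The substitution realizing the birational transformation `r_j`. -/
noncomputable def rAct (m M : ℕ) {K : Type*} [Field K] (j : ZMod M)
    (φ : ZMod M → ZMod m → K) : ZMod M → ZMod m → K := fun k i =>
  if k = j then (φ j (i + 1))⁻¹ * (polP m M φ j i / polP m M φ j (i + 2))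
  else if k = j - 1 then
    φ (j - 1) i * φ j (i + 1) * (polP m M φ j (i + 2) / polP m M φ j (i + 1))
  else if k = j + 1 then
    φ j i * φ (j + 1) i * (polP m M φ j (i + 1) / polP m M φ j i)
  else φ k i

/-- The substitution realizing `π_1(φ_{j,i}) = φ_{j+1,i+1}`. -/
def piOne (m M : ℕ) {K : Type*} [Field K] (φ : ZMod M → ZMod m → K) :
    ZMod M → ZMod m → K := fun j i => φ (j + 1) (i + 1)

lemma polP_piOne (m M : ℕ) {K : Type*} [Field K] (φ : ZMod M → ZMod m → K)
    (j : ZMod M) (i : ZMod m) :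
    polP m M (piOne m M φ) j i = polP m M φ (j + 1) (i + 1) := by
  unfold polP piOne
  refine Finset.sum_congr rfl fun a _ => Finset.prod_congr rfl fun l _ => ?_
  congr 1
  ring

/-- The intertwining relation `r_j π_1 = π_1 r_{j-1}` as an identity of the
corresponding substitutions on the variables (composition of field automorphisms
reverses the order of the substitution maps). -/
theorem stmt12 {K : Type*} [Field K] (m n : ℕ) (hm : 2 ≤ m) (hmn : 3 ≤ m * n)
    (j : ZMod (m * n)) (φ : ZMod (m * n) → ZMod m → K) (hφ : ∀ k i, φ k i ≠ 0)
    (hP : ∀ i, polP m (m * n) φ j i ≠ 0) :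
    piOne m (m * n) (rAct m (m * n) j φ)
      = rAct m (m * n) (j - 1) (piOne m (m * n) φ) := by
  have : NeZero (m * n) := ⟨by omega⟩
  have h1 : (1 : ZMod (m * n)) ≠ 0 := by
    intro h
    have hd : m * n ∣ 1 := by
      have := (ZMod.natCast_eq_zero_iff 1 (m * n)).mp (by simpa using h)
      exact this
    have := Nat.le_of_dvd one_pos hd; omega
  have h2 : (2 : ZMod (m * n)) ≠ 0 := by
    intro h
    have hd : m * n ∣ 2 := by
      have := (ZMod.natCast_eq_zero_iff 2 (m * n)).mp (by simpa using h)
      exact this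
    have := Nat.le_of_dvd two_pos hd; omega
  funext k i
  show rAct m (m * n) j φ (k + 1) (i + 1)
      = rAct m (m * n) (j - 1) (piOne m (m * n) φ) k i
  have ej : j - 1 + 1 = j := by ring
  simp only [rAct, polP_piOne, ej]
  simp only [piOne]
  by_cases hk1 : k = j - 1
  · rw [if_pos (by linear_combination hk1), if_pos hk1]
    ring_nf
  · by_cases hk2 : k = j - 2
    · rw [if_neg (fun h => hk1 (by linear_combination h)),
        if_pos (by linear_combination hk2),
        if_neg hk1, if_pos (by linear_combination hk2)]
      ring_nf
    · by_cases hk3 : k = j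
      · rw [if_neg (fun h => h1 (by linear_combination h - hk3)),
          if_neg (fun h => h2 (by linear_combination h - hk3)),
          if_pos (by linear_combination hk3),
          if_neg hk1, if_neg (fun h => hk2 (by linear_combination h)),
          if_pos (by linear_combination hk3)]
        ring_nf
      · rw [if_neg (fun h => hk1 (by linear_combination h)),
          if_neg (fun h => hk2 (by linear_combination h)),
          if_neg (fun h => hk3 (by linear_combination h)),
          if_neg hk1, if_neg (fun h => hk2 (by linear_combination h)),
          if_neg (fun h => hk3 (by linear_combination h))]
end

section
/- For m ≥ 3, define s_i on ℂ(φ) by s_i(φ_{j,i-1}) = φ_{j,i-1} φ_{j+1,i} Q_{j+2,i}/Q_{j+1,i}, s_i(φ_{j,i}) = φ_{j+1,i}^{-1} Q_{j,i}/Q_{j+2,i}, s_i(φ_{j,i+1}) = φ_{j,i} φ_{j,i+1} Q_{j+1,i}/Q_{j,i}, and s_i(φ_{j,k}) = φ_{j,k} for k ≠ i, i±1, where Q_{j,i} = Σ_{k=0}^{mn-1} Π_{l=0}^{k-1} φ_{j+l,i}. Then s_i acts on the parameters by s_i(β_i) = β_i^{-1}, s_i(β_{i±1}) = β_{i±1}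 β_i, s_i(β_k) = β_k for k ≠ i, i±1, and s_i(α_j) = α_j for all j, where α_j = Π_i φ_{j,i} and β_i = Π_j φ_{j,i}. -/
lemma prod_cast_eq {K : Type*} [CommMonoid K] (N : ℕ) [NeZero N] (g : ZMod N → K) :
    ∏ j ∈ Finset.range N, g ((j : ℕ) : ZMod N) = ∏ x : ZMod N, g x := by
  apply Finset.prod_nbij' (fun j => ((j : ℕ) : ZMod N)) (fun x => x.val)
  · intro a _; exact Finset.mem_univ _
  · intro x _; exact Finset.mem_range.mpr (ZMod.val_lt x)
  · intro a ha; exact ZMod.val_natCast_of_lt (Finset.mem_range.mp ha)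
  · intro x _; exact ZMod.natCast_rightInverse x
  · intro a _; rfl

lemma prod_shift {K : Type*} [CommMonoid K] (N : ℕ) [NeZero N] (f : ZMod N → K) (c : ZMod N) :
    ∏ j ∈ Finset.range N, f (((j : ℕ) : ZMod N) + c) =
      ∏ j ∈ Finset.range N, f ((j : ℕ) : ZMod N) := by
  rw [prod_cast_eq N (fun x => f (x + c)), prod_cast_eq N f]
  exact Equiv.prod_comp (Equiv.addRight c) f

/-- For `m ≥ 3`, the transformation `s_i` (defined via the polynomials
`Q_{j,i} = Σ_{k=0}^{mn-1} Π_{l=0}^{k-1} φ_{j+l,i}`) acts on the parameters by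
`s_i(β_i) = β_i⁻¹`, `s_i(β_{i±1}) = β_{i±1} β_i`, fixes the other `β_k` and all `α_j`.
Here `ψ` denotes the family of images `s_i(φ_{j,k})`. -/
theorem stmt13 {K : Type*} [Field K] (m n : ℕ) (hm : 3 ≤ m) (hn : 1 ≤ n)
    (φ : ZMod (m * n) → ZMod m → K) (hφ : ∀ j k, φ j k ≠ 0)
    (i : ZMod m)
    (Q : ZMod (m * n) → ZMod m → K)
    (hQ : ∀ j k, Q j k =
      ∑ a ∈ Finset.range (m * n), ∏ l ∈ Finset.range a, φ (j + (l : ZMod (m * n))) k)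
    (hQne : ∀ j, Q j i ≠ 0)
    (ψ : ZMod (m * n) → ZMod m → K)
    (hψ : ∀ j k, ψ j k =
      if k = i then (φ (j + 1) i)⁻¹ * (Q j i / Q (j + 2) i)
      else if k = i - 1 then φ j (i - 1) * φ (j + 1) i * (Q (j + 2) i / Q (j + 1) i)
      else if k = i + 1 then φ j i * φ j (i + 1) * (Q (j + 1) i / Q j i)
      else φ j k)
    (α α' : ZMod (m * n) → K)
    (hα : ∀ j, α j = ∏ k ∈ Finset.range m, φ j ((k : ℕ) : ZMod m))
    (hα' : ∀ j, α' j = ∏ k ∈ Finset.range m, ψ j ((k : ℕ) : ZMod m))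
    (β β' : ZMod m → K)
    (hβ : ∀ k, β k = ∏ j ∈ Finset.range (m * n), φ ((j : ℕ) : ZMod (m * n)) k)
    (hβ' : ∀ k, β' k = ∏ j ∈ Finset.range (m * n), ψ ((j : ℕ) : ZMod (m * n)) k) :
    β' i = (β i)⁻¹ ∧ β' (i - 1) = β (i - 1) * β i ∧ β' (i + 1) = β (i + 1) * β i ∧
      (∀ k, k ≠ i → k ≠ i - 1 → k ≠ i + 1 → β' k = β k) ∧ ∀ j, α' j = α j := by
  have hmn : 0 < m * n := Nat.mul_pos (by omega) hn
  haveI : NeZero (m * n) := ⟨hmn.ne'⟩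
  haveI : NeZero m := ⟨by omega⟩
  -- distinctness of i, i-1, i+1 in ZMod m
  have h2ne : (2 : ZMod m) ≠ 0 := by
    have : ((2 : ℕ) : ZMod m) ≠ 0 := by
      rw [Ne, ZMod.natCast_eq_zero_iff]
      intro h; have := Nat.le_of_dvd (by norm_num) h; omega
    simpa using this
  have h1ne : (1 : ZMod m) ≠ 0 := by
    have : ((1 : ℕ) : ZMod m) ≠ 0 := by
      rw [Ne, ZMod.natCast_eq_zero_iff]
      intro h; have := Nat.le_of_dvd (by norm_num) h; omega
    simpa using this
  have hd1 : i - 1 ≠ i := fun h => h1ne (by linear_combination -h)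
  have hd2 : i + 1 ≠ i := fun h => h1ne (by linear_combination h)
  have hd3 : i + 1 ≠ i - 1 := fun h => h2ne (by linear_combination h)
  -- values of ψ
  have hψi : ∀ j, ψ j i = (φ (j + 1) i)⁻¹ * (Q j i / Q (j + 2) i) := fun j => by
    rw [hψ]; simp
  have hψm : ∀ j, ψ j (i - 1) = φ j (i - 1) * φ (j + 1) i * (Q (j + 2) i / Q (j + 1) i) :=
    fun j => by rw [hψ]; simp [hd1]
  have hψp : ∀ j, ψ j (i + 1) = φ j i * φ j (i + 1) * (Q (j + 1) i / Q j i) := fun j => by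
    rw [hψ]; simp [hd2, hd3]
  have hψo : ∀ j k, k ≠ i → k ≠ i - 1 → k ≠ i + 1 → ψ j k = φ j k := fun j k h1 h2 h3 => by
    rw [hψ]; simp [h1, h2, h3]
  -- telescoping products of Q
  have hPQ : ∀ c : ZMod (m * n),
      ∏ j ∈ Finset.range (m * n), Q (((j : ℕ) : ZMod (m * n)) + c) i =
        ∏ j ∈ Finset.range (m * n), Q ((j : ℕ) : ZMod (m * n)) i :=
    fun c => prod_shift (m * n) (fun x => Q x i) c
  have hPQne : (∏ j ∈ Finset.range (m * n), Q ((j : ℕ) : ZMod (m * n)) i) ≠ 0 :=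
    Finset.prod_ne_zero_iff.mpr fun j _ => hQne _
  have hφshift : ∀ c : ZMod (m * n),
      ∏ j ∈ Finset.range (m * n), φ (((j : ℕ) : ZMod (m * n)) + c) i = β i := fun c => by
    rw [prod_shift (m * n) (fun x => φ x i) c, hβ]
  refine ⟨?_, ?_, ?_, ?_, ?_⟩
  · rw [hβ' i]
    simp only [hψi]
    rw [Finset.prod_mul_distrib, Finset.prod_div_distrib, Finset.prod_inv_distrib,
      hφshift 1, hPQ 2, div_self hPQne, mul_one]
  · rw [hβ' (i - 1)]
    simp only [hψm]
    rw [Finset.prod_mul_distrib, Finset.prod_mul_distrib, Finset.prod_div_distrib,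
      hφshift 1, hPQ 2, hPQ 1, div_self hPQne, mul_one, ← hβ]
  · rw [hβ' (i + 1)]
    simp only [hψp]
    rw [Finset.prod_mul_distrib, Finset.prod_mul_distrib, Finset.prod_div_distrib]
    have hb : ∏ j ∈ Finset.range (m * n), φ ((j : ℕ) : ZMod (m * n)) i = β i := (hβ i).symm
    rw [hb, hPQ 1, div_self hPQne, mul_one, ← hβ, mul_comm]
  · intro k h1 h2 h3
    rw [hβ' k, hβ k]
    exact Finset.prod_congr rfl fun j _ => hψo _ k h1 h2 h3
  · intro j
    rw [hα' j, hα j, prod_cast_eq m (ψ j), prod_cast_eq m (φ j)]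
    have hS : ({i - 1, i, i + 1} : Finset (ZMod m)) ⊆ Finset.univ := Finset.subset_univ _
    rw [← Finset.prod_sdiff hS, ← Finset.prod_sdiff hS]
    have heq : ∏ k ∈ Finset.univ \ {i - 1, i, i + 1}, ψ j k =
        ∏ k ∈ Finset.univ \ {i - 1, i, i + 1}, φ j k := by
      refine Finset.prod_congr rfl fun k hk => ?_
      simp only [Finset.mem_sdiff, Finset.mem_insert, Finset.mem_singleton, not_or] at hk
      exact hψo j k hk.2.2.1 hk.2.1 hk.2.2.2
    rw [heq]
    congr 1
    have hni : i ∉ ({i + 1} : Finset (ZMod m)) := by simp [hd2.symm]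
    have hnm : i - 1 ∉ ({i, i + 1} : Finset (ZMod m)) := by simp [hd1, hd3.symm]
    rw [Finset.prod_insert hnm, Finset.prod_insert hni, Finset.prod_singleton,
      Finset.prod_insert hnm, Finset.prod_insert hni, Finset.prod_singleton,
      hψm j, hψi j, hψp j]
    have n1 : φ (j + 1) i ≠ 0 := hφ _ _
    have n2 : Q j i ≠ 0 := hQne j
    have n3 : Q (j + 1) i ≠ 0 := hQne _
    have n4 : Q (j + 2) i ≠ 0 := hQne _
    field_simp
end

section
/- For m = 2, define s_i on ℂ(φ) by s_i(φ_{j,i}) = φ_{j+1,i}^{-1} Q_{j,i}/Q_{j+2,i} and s_i(φ_{j,i+1}) = φ_{j,i} φ_{j,i+1} φ_{j+1,i} Q_{j+2,i}/Q_{j,i}, where Q_{j,i} = Σ_{k=0}^{2n-1} Π_{l=0}^{k-1} φ_{j+l,i}. Then s_i(β_i) = β_i^{-1}, s_i(β_{i+1}) = β_{i+1} β_i^2, and s_i(α_j) = α_j for all j ∈ ℤ/2nℤ, where α_j = φ_{j,0} φ_{j,1} and β_i = Π_{j=0}^{2n-1} φ_{j,i}. -/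
/-- For `m = 2`, the transformation `s_i` acts on the parameters by
`s_i(β_i) = β_i⁻¹`, `s_i(β_{i+1}) = β_{i+1} β_i²` and fixes all `α_j = φ_{j,0}φ_{j,1}`.
Here `ψ` denotes the family of images `s_i(φ_{j,k})`. -/

theorem stmt14 {K : Type*} [Field K] (n : ℕ) (hn : 1 ≤ n)
    (φ : ZMod (2 * n) → ZMod 2 → K) (hφ : ∀ j k, φ j k ≠ 0)
    (i : ZMod 2)
    (Q : ZMod (2 * n) → ZMod 2 → K)
    (hQ : ∀ j k, Q j k =
      ∑ a ∈ Finset.range (2 * n), ∏ l ∈ Finset.range a, φ (j + (l : ZMod (2 * n))) k)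
    (hQne : ∀ j, Q j i ≠ 0)
    (ψ : ZMod (2 * n) → ZMod 2 → K)
    (hψi : ∀ j, ψ j i = (φ (j + 1) i)⁻¹ * (Q j i / Q (j + 2) i))
    (hψi' : ∀ j, ψ j (i + 1) = φ j i * φ j (i + 1) * φ (j + 1) i * (Q (j + 2) i / Q j i))
    (β β' : ZMod 2 → K)
    (hβ : ∀ k, β k = ∏ j ∈ Finset.range (2 * n), φ ((j : ℕ) : ZMod (2 * n)) k)
    (hβ' : ∀ k, β' k = ∏ j ∈ Finset.range (2 * n), ψ ((j : ℕ) : ZMod (2 * n)) k) :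
    β' i = (β i)⁻¹ ∧ β' (i + 1) = β (i + 1) * (β i) ^ 2 ∧
      ∀ j : ZMod (2 * n), ψ j 0 * ψ j 1 = φ j 0 * φ j 1 := by
  haveI : NeZero (2 * n) := ⟨by omega⟩
  -- products over range equal products over univ
  have prodR : ∀ g : ZMod (2 * n) → K,
      ∏ j ∈ Finset.range (2 * n), g ((j : ℕ) : ZMod (2 * n)) = ∏ j : ZMod (2 * n), g j := by
    intro g
    refine Finset.prod_nbij' (fun j => ((j : ℕ) : ZMod (2 * n))) (fun a => a.val) ?_ ?_ ?_ ?_ ?_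
    · intro a _; exact Finset.mem_univ _
    · intro a _; exact Finset.mem_range.mpr (ZMod.val_lt a)
    · intro a ha; exact ZMod.val_cast_of_lt (Finset.mem_range.mp ha)
    · intro a _; simp [ZMod.natCast_val, ZMod.cast_id]
    · intro a _; rfl
  have shift : ∀ (c : ZMod (2 * n)) (g : ZMod (2 * n) → K),
      ∏ j : ZMod (2 * n), g (j + c) = ∏ j : ZMod (2 * n), g j := by
    intro c g
    simpa using Equiv.prod_comp (Equiv.addRight c) g
  have hQprod : (∏ j : ZMod (2 * n), Q j i) ≠ 0 :=
    Finset.prod_ne_zero_iff.mpr fun j _ => hQne j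
  have hφprod : ∀ k, (∏ j : ZMod (2 * n), φ j k) ≠ 0 := fun k =>
    Finset.prod_ne_zero_iff.mpr fun j _ => hφ j k
  have hβu : ∀ k, β k = ∏ j : ZMod (2 * n), φ j k := fun k => (hβ k).trans (prodR fun a => φ a k)
  have hβ'u : ∀ k, β' k = ∏ j : ZMod (2 * n), ψ j k := fun k => (hβ' k).trans (prodR fun a => ψ a k)
  have s1 : ∏ j : ZMod (2 * n), φ (j + 1) i = ∏ j : ZMod (2 * n), φ j i := shift 1 (fun a => φ a i)
  have s2 : ∏ j : ZMod (2 * n), Q (j + 2) i = ∏ j : ZMod (2 * n), Q j i := shift 2 (fun a => Q a i)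
  refine ⟨?_, ?_, ?_⟩
  · rw [hβ'u, hβu]
    calc ∏ j : ZMod (2 * n), ψ j i
        = ∏ j : ZMod (2 * n), (φ (j + 1) i)⁻¹ * (Q j i / Q (j + 2) i) := by
          exact Finset.prod_congr rfl fun j _ => hψi j
      _ = (∏ j : ZMod (2 * n), φ (j + 1) i)⁻¹ *
            ((∏ j : ZMod (2 * n), Q j i) / (∏ j : ZMod (2 * n), Q (j + 2) i)) := by
          rw [Finset.prod_mul_distrib, Finset.prod_inv_distrib, Finset.prod_div_distrib]
      _ = (∏ j : ZMod (2 * n), φ j i)⁻¹ := by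
          rw [s1, s2, div_self hQprod, mul_one]
  · rw [hβ'u, hβu, hβu]
    calc ∏ j : ZMod (2 * n), ψ j (i + 1)
        = ∏ j : ZMod (2 * n), φ j i * φ j (i + 1) * φ (j + 1) i * (Q (j + 2) i / Q j i) := by
          exact Finset.prod_congr rfl fun j _ => hψi' j
      _ = (∏ j : ZMod (2 * n), φ j i) * (∏ j : ZMod (2 * n), φ j (i + 1)) *
            (∏ j : ZMod (2 * n), φ (j + 1) i) *
            ((∏ j : ZMod (2 * n), Q (j + 2) i) / (∏ j : ZMod (2 * n), Q j i)) := by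
          rw [Finset.prod_mul_distrib, Finset.prod_mul_distrib, Finset.prod_mul_distrib,
            Finset.prod_div_distrib]
      _ = (∏ j : ZMod (2 * n), φ j (i + 1)) * (∏ j : ZMod (2 * n), φ j i) ^ 2 := by
          rw [s1, s2, div_self hQprod, mul_one]; ring
  · intro j
    have key : ψ j i * ψ j (i + 1) = φ j i * φ j (i + 1) := by
      rw [hψi j, hψi' j]
      field_simp [hφ (j + 1) i, hQne j, hQne (j + 2)]
    have hi : i = 0 ∨ i = 1 := by
      have h : i.val = 0 ∨ i.val = 1 := by have := ZMod.val_lt i; omega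
      have hc : ((i.val : ℕ) : ZMod 2) = i := ZMod.natCast_rightInverse i
      rcases h with h | h
      · left; rw [← hc, h]; rfl
      · right; rw [← hc, h]; rfl
    rcases hi with hi | hi <;> subst hi
    · simpa using key
    · have h2 : (1 : ZMod 2) + 1 = 0 := by decide
      rw [h2] at key
      linear_combination key
end
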